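/- On unit-cost instances with exhaustive ground truths, the greedy cost approval rule is the MLE of the noise model N_app: let I = ⟨P, c, b⟩ be a unit-cost instance (there is ℓ ≥ 1 with c(p) = ℓ for all p ∈ P and ℓ divides b), with ℓ·|P| ≥ b, and for each feasible allocation π define ℙ(A | π) = 2^{|A ∩ π|} / (2^{|P|−|π|} · 3^{|π|}). Then for every profile A, F_greed(I, A) equals the set of exhaustive allocations π maximizing the likelihood ∏_i ℙ(A_i | π) over all exhaustive allocations. -/

import Mathlib

/-!
With unit costs `ℓ`, feasibility only depends on the number of projects: the greedy rule picks
the first `⌊b/ℓ⌋` projects of its order, and the exhaustive allocations are exactly those with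
`k = min ⌊b/ℓ⌋ |P|` projects. Among allocations of size `k` the likelihood is `2` to the total
approval score over a common denominator, so the MLE allocations are the size-`k` sets of maximal
total score. By an exchange argument these are the sets that no excluded project outscores, which
are precisely the initial segments of length `k` of the score-compatible orders.
-/

/-- Examine the projects in the order given by the list, selecting each project
whenever the total cost of selected projects stays within the budget. -/
def greedAux {P : Type*} [DecidableEq P] (c : P → ℕ) (b : ℕ) :
    List P → Finset P → Finset P
  | [], sel => sel
  | p :: rest, sel =>
      if ∑ q ∈ insert p sel, c q ≤ b then greedAux c b rest (insert p sel)
      else greedAux c b rest sel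

/-- The approval score of project `p` in profile `A`: the number of ballots
containing `p`. -/
def appScore {P : Type*} [DecidableEq P] (A : List (Finset P)) (p : P) : ℕ :=
  A.countP (fun Ai => decide (p ∈ Ai))

/-- The greedy cost approval rule: all allocations obtained by greedily examining
the projects along some linear order (given as a duplicate-free enumeration of
all projects) that ranks projects with strictly higher approval scores first. -/
def Fgreed {P : Type*} [Fintype P] [DecidableEq P] (c : P → ℕ) (b : ℕ)
    (A : List (Finset P)) : Set (Finset P) :=
  {π : Finset P | ∃ L : List P, L.Nodup ∧ (∀ p, p ∈ L) ∧
    (∀ p p' : P, appScore A p' < appScore A p → L.idxOf p < L.idxOf p') ∧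
    π = greedAux c b L ∅}

/-- A budget allocation is exhaustive if it is feasible and no further project
can be added without exceeding the budget. -/
def Exhaustive {P : Type*} [DecidableEq P] (c : P → ℕ) (b : ℕ) (π : Finset P) : Prop :=
  ∑ p ∈ π, c p ≤ b ∧ ∀ p ∉ π, ¬ (∑ q ∈ insert p π, c q ≤ b)

open Finset

section UnitCost

variable {P : Type*} {c : P → ℕ} {ℓ : ℕ}

theorem sum_eq_mul_card_of_unit_cost (hc : ∀ p, c p = ℓ) (s : Finset P) :
    ∑ p ∈ s, c p = ℓ * s.card := by
  simp [hc, mul_comm]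

variable [DecidableEq P]

theorem sum_insert_le_iff_of_unit_cost (hℓ : 1 ≤ ℓ) (hc : ∀ p, c p = ℓ) (b : ℕ) {π : Finset P}
    {p : P} (hp : p ∉ π) : ∑ q ∈ insert p π, c q ≤ b ↔ π.card + 1 ≤ b / ℓ := by
  rw [sum_eq_mul_card_of_unit_cost hc, card_insert_of_notMem hp, Nat.le_div_iff_mul_le hℓ,
    mul_comm]

theorem exhaustive_iff_card_eq [Fintype P] (hℓ : 1 ≤ ℓ) (hc : ∀ p, c p = ℓ) (b : ℕ)
    (π : Finset P) : Exhaustive c b π ↔ π.card = min (b / ℓ) (Fintype.card P) := by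
  rw [Exhaustive, sum_eq_mul_card_of_unit_cost hc, mul_comm, ← Nat.le_div_iff_mul_le hℓ]
  have hfull : (∀ p ∉ π, ¬∑ q ∈ insert p π, c q ≤ b) ↔ ∀ p ∉ π, ¬π.card + 1 ≤ b / ℓ :=
    forall₂_congr fun p hp => not_congr (sum_insert_le_iff_of_unit_cost hℓ hc b hp)
  rw [hfull]
  by_cases hπ : π = univ
  · simp [hπ]
  · obtain ⟨p, hp⟩ : ∃ p, p ∉ π := by simpa [eq_univ_iff_forall] using hπ
    have hlt : π.card < Fintype.card P := card_lt_univ_of_notMem hp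
    constructor
    · rintro ⟨hle, hmax⟩
      have := hmax p hp
      omega
    · intro h
      exact ⟨by omega, fun _ _ => by omega⟩

theorem greedAux_of_unit_cost (hℓ : 1 ≤ ℓ) (hc : ∀ p, c p = ℓ) (b : ℕ) :
    ∀ (L : List P) (sel : Finset P), L.Nodup → (∀ p ∈ L, p ∉ sel) →
      greedAux c b L sel = sel ∪ (L.take (b / ℓ - sel.card)).toFinset
  | [], sel, _, _ => by simp [greedAux]
  | p :: L, sel, hnd, hdisj => by
    obtain ⟨hpL, hnd⟩ := List.nodup_cons.1 hnd
    have hp : p ∉ sel := hdisj p List.mem_cons_self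
    rw [greedAux]
    split_ifs with hle <;> rw [sum_insert_le_iff_of_unit_cost hℓ hc b hp] at hle
    · have hdisj' : ∀ q ∈ L, q ∉ insert p sel := fun q hq => by
        simpa [ne_of_mem_of_not_mem hq hpL] using hdisj q (List.mem_cons_of_mem p hq)
      obtain ⟨j, hj⟩ : ∃ j, b / ℓ - sel.card = j + 1 := ⟨b / ℓ - sel.card - 1, by omega⟩
      rw [greedAux_of_unit_cost hℓ hc b L _ hnd hdisj', card_insert_of_notMem hp, hj,
        show b / ℓ - (sel.card + 1) = j by omega]
      simp
    · rw [greedAux_of_unit_cost hℓ hc b L sel hnd fun q hq => hdisj q (List.mem_cons_of_mem p hq),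
        show b / ℓ - sel.card = 0 by omega]
      simp

theorem greedAux_empty_of_unit_cost (hℓ : 1 ≤ ℓ) (hc : ∀ p, c p = ℓ) (b : ℕ) {L : List P}
    (hL : L.Nodup) : greedAux c b L ∅ = (L.take (b / ℓ)).toFinset := by
  simpa using greedAux_of_unit_cost hℓ hc b L ∅ hL (by simp)

end UnitCost

section TopSet

variable {P α : Type*} [LinearOrder α] {s : P → α}

def IsTopSet (s : P → α) (π : Finset P) : Prop :=
  ∀ p ∈ π, ∀ p' ∉ π, s p' ≤ s p

variable [DecidableEq P]

theorem List.Pairwise.idxOf_lt_idxOf {l : List P} (hl : l.Pairwise fun a b => s b ≤ s a)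
    {p p' : P} (hp : p ∈ l) (h : s p' < s p) : l.idxOf p < l.idxOf p' := by
  have hpl := List.idxOf_lt_length_of_mem hp
  by_contra! hle
  rcases hle.lt_or_eq with hlt | heq
  · have hle' := List.pairwise_iff_getElem.1 hl _ _ (hlt.trans hpl) hpl hlt
    rw [List.getElem_idxOf, List.getElem_idxOf] at hle'
    exact hle'.not_gt h
  · obtain rfl := (List.idxOf_inj hp).1 heq.symm
    exact h.false

theorem isTopSet_take_toFinset {L : List P} (hL : ∀ p, p ∈ L)
    (hs : ∀ p p', s p' < s p → L.idxOf p < L.idxOf p') (k : ℕ) :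
    IsTopSet s (L.take k).toFinset := by
  intro p hp p' hp'
  rw [List.mem_toFinset, List.mem_take_iff_idxOf_lt (hL _)] at hp hp'
  by_contra! h
  exact hp' ((hs p' p h).trans hp)

theorem IsTopSet.exists_list [Fintype P] {π : Finset P} (hπ : IsTopSet s π) :
    ∃ L : List P, L.Nodup ∧ (∀ p, p ∈ L) ∧ (∀ p p', s p' < s p → L.idxOf p < L.idxOf p') ∧
      (L.take π.card).toFinset = π := by
  let sort (t : Finset P) : List P := t.toList.mergeSort fun a b => decide (s b ≤ s a)
  have hperm (t : Finset P) : (sort t).Perm t.toList := List.mergeSort_perm _ _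
  have hmem (t : Finset P) (p : P) : p ∈ sort t ↔ p ∈ t := (hperm t).mem_iff.trans mem_toList
  have hsorted (t : Finset P) : (sort t).Pairwise fun a b => s b ≤ s a := by
    simpa using List.pairwise_mergeSort (le := fun a b => decide (s b ≤ s a))
      (fun a b c hab hbc => by simp only [decide_eq_true_eq] at *; exact hbc.trans hab)
      (fun a b => by simpa using le_total (s b) (s a)) t.toList
  have hmem_compl (p : P) : p ∈ sort πᶜ ↔ p ∉ π := by rw [hmem, mem_compl]
  have hmem_append (p : P) : p ∈ sort π ++ sort πᶜ := by
    by_cases hp : p ∈ π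
    · exact List.mem_append_left _ ((hmem π p).2 hp)
    · exact List.mem_append_right _ ((hmem_compl p).2 hp)
  refine ⟨sort π ++ sort πᶜ, ?_, hmem_append, fun p p' h => ?_, ?_⟩
  · refine List.nodup_append.2 ⟨(hperm π).nodup_iff.2 π.nodup_toList,
      (hperm πᶜ).nodup_iff.2 πᶜ.nodup_toList, fun a ha b hb hab => ?_⟩
    exact (hmem_compl b).1 hb (hab ▸ (hmem π a).1 ha)
  · refine List.Pairwise.idxOf_lt_idxOf ?_ (hmem_append p) h
    exact List.pairwise_append.2 ⟨hsorted π, hsorted πᶜ, fun a ha b hb =>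
      hπ a ((hmem π a).1 ha) b ((hmem_compl b).1 hb)⟩
  · rw [List.take_left' ((hperm π).length_eq.trans π.length_toList)]
    ext p
    rw [List.mem_toFinset, hmem]

end TopSet

section SumOverCardinality

variable {ι M : Type*} [AddCommMonoid M] [LinearOrder M]

theorem sum_le_sum_of_card_eq_of_forall_le [IsOrderedAddMonoid M] {s t : Finset ι} {f : ι → M}
    (hst : s.card = t.card) (h : ∀ a ∈ s, ∀ b ∈ t, f a ≤ f b) :
    ∑ a ∈ s, f a ≤ ∑ b ∈ t, f b := by
  rcases t.eq_empty_or_nonempty with rfl | ht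
  · simp [card_eq_zero.1 hst]
  calc ∑ a ∈ s, f a ≤ s.card • t.inf' ht f :=
        sum_le_card_nsmul _ _ _ fun a ha => le_inf' ht _ fun b hb => h a ha b hb
    _ = t.card • t.inf' ht f := by rw [hst]
    _ ≤ ∑ b ∈ t, f b := card_nsmul_le_sum _ _ _ fun b hb => inf'_le _ hb

variable [DecidableEq ι] {f : ι → M} {π : Finset ι}

theorem IsTopSet.sum_le [IsOrderedAddMonoid M] (hπ : IsTopSet f π) {π' : Finset ι}
    (hcard : π'.card = π.card) : ∑ p ∈ π', f p ≤ ∑ p ∈ π, f p := by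
  rw [← sum_inter_add_sum_sdiff π' π, ← sum_inter_add_sum_sdiff π π', inter_comm π]
  exact add_le_add_right (sum_le_sum_of_card_eq_of_forall_le (card_sdiff_comm hcard)
    fun a ha b hb => hπ b (mem_sdiff.1 hb).1 a (mem_sdiff.1 ha).2) _

theorem isTopSet_iff_forall_card_eq_sum_le [IsOrderedCancelAddMonoid M] :
    IsTopSet f π ↔ ∀ π' : Finset ι, π'.card = π.card → ∑ p ∈ π', f p ≤ ∑ p ∈ π, f p := by
  refine ⟨fun hπ π' => hπ.sum_le, fun hmax p hp p' hp' => ?_⟩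
  have hp'' : p' ∉ π.erase p := fun h => hp' (mem_of_mem_erase h)
  have hswap := hmax (insert p' (π.erase p))
    (by rw [card_insert_of_notMem hp'', card_erase_add_one hp])
  rw [sum_insert hp'', ← add_sum_erase π f hp] at hswap
  exact le_of_add_le_add_right hswap

end SumOverCardinality

section Approval

variable {P : Type*} [DecidableEq P]

theorem sum_appScore_cons (Ai : Finset P) (A : List (Finset P)) (π : Finset P) :
    ∑ p ∈ π, appScore (Ai :: A) p = (Ai ∩ π).card + ∑ p ∈ π, appScore A p := by
  simp [appScore, List.countP_cons, sum_add_distrib, add_comm, inter_comm]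

theorem prod_map_pow_card_inter_div {K : Type*} [DivisionCommMonoid K] (a D : K)
    (π : Finset P) : ∀ A : List (Finset P),
      (A.map fun Ai => a ^ (Ai ∩ π).card / D).prod = a ^ (∑ p ∈ π, appScore A p) / D ^ A.length
  | [] => by simp [appScore]
  | Ai :: A => by
    rw [List.map_cons, List.prod_cons, prod_map_pow_card_inter_div a D π A, sum_appScore_cons,
      pow_add, List.length_cons, pow_succ', div_mul_div_comm]

theorem mem_Fgreed_iff_of_unit_cost [Fintype P] {c : P → ℕ} {ℓ : ℕ} (hℓ : 1 ≤ ℓ)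
    (hc : ∀ p, c p = ℓ) (b : ℕ) (A : List (Finset P)) (π : Finset P) :
    π ∈ Fgreed c b A ↔
      π.card = min (b / ℓ) (Fintype.card P) ∧ IsTopSet (appScore A) π := by
  have hlength {L : List P} (hnd : L.Nodup) (hL : ∀ p, p ∈ L) : L.length = Fintype.card P := by
    rw [← List.toFinset_card_of_nodup hnd, eq_univ_of_forall fun p => List.mem_toFinset.2 (hL p),
      card_univ]
  constructor
  · rintro ⟨L, hnd, hL, hs, rfl⟩
    rw [greedAux_empty_of_unit_cost hℓ hc b hnd]
    refine ⟨?_, isTopSet_take_toFinset hL hs _⟩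
    rw [List.toFinset_card_of_nodup (hnd.sublist (List.take_sublist _ _)), List.length_take,
      hlength hnd hL]
  · rintro ⟨hcard, hπ⟩
    obtain ⟨L, hnd, hL, hs, htake⟩ := hπ.exists_list
    refine ⟨L, hnd, hL, hs, ?_⟩
    rw [greedAux_empty_of_unit_cost hℓ hc b hnd, List.take_eq_take_min, hlength hnd hL, ← hcard,
      htake]

end Approval

theorem greedy_MLE_unit_cost_exhaustive_general
    {P : Type*} [Fintype P] [DecidableEq P]
    (c : P → ℕ) (b ℓ : ℕ) (hℓ : 1 ≤ ℓ) (hc : ∀ p, c p = ℓ)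
    (Pr : Finset P → Finset P → ℝ)
    (hPr : ∀ A π : Finset P,
      Pr A π = (2 ^ (A ∩ π).card : ℝ) / (2 ^ (Fintype.card P - π.card) * 3 ^ π.card)) :
    ∀ A : List (Finset P),
      Fgreed c b A =
        {π : Finset P | Exhaustive c b π ∧
          ∀ π' : Finset P, Exhaustive c b π' →
            (A.map (fun Ai => Pr Ai π')).prod ≤ (A.map (fun Ai => Pr Ai π)).prod} := by
  intro A
  -- allocations of equal size have likelihoods with equal denominators
  have hlik {π π' : Finset P} (hcard : π'.card = π.card) :
      (A.map fun Ai => Pr Ai π').prod ≤ (A.map fun Ai => Pr Ai π).prod ↔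
        ∑ p ∈ π', appScore A p ≤ ∑ p ∈ π, appScore A p := by
    simp only [hPr, hcard, prod_map_pow_card_inter_div]
    rw [div_le_div_iff_of_pos_right (by positivity), pow_le_pow_iff_right₀ one_lt_two]
  ext π
  simp only [mem_Fgreed_iff_of_unit_cost hℓ hc, Set.mem_ofPred_eq,
    exhaustive_iff_card_eq hℓ hc, isTopSet_iff_forall_card_eq_sum_le]
  refine and_congr_right fun hπ => forall_congr' fun π' => ?_
  rw [← hπ]
  exact imp_congr_right fun hcard => (hlik hcard).symm

/-- On unit-cost instances with exhaustive ground truths, the greedy cost approval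
rule is the MLE of the noise model `N_app` given by
`ℙ(A | π) = 2 ^ |A ∩ π| / (2 ^ (|P| - |π|) * 3 ^ |π|)`. -/
theorem greedy_MLE_unit_cost_exhaustive
    {P : Type*} [Fintype P] [DecidableEq P]
    (c : P → ℕ) (b ℓ : ℕ) (hℓ : 1 ≤ ℓ) (hc : ∀ p, c p = ℓ) (hdvd : ℓ ∣ b)
    (hPb : b ≤ ℓ * Fintype.card P)
    (Pr : Finset P → Finset P → ℝ)
    (hPr : ∀ A π : Finset P,
      Pr A π = (2 ^ (A ∩ π).card : ℝ) / (2 ^ (Fintype.card P - π.card) * 3 ^ π.card)) :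
    ∀ A : List (Finset P),
      Fgreed c b A =
        {π : Finset P | Exhaustive c b π ∧
          ∀ π' : Finset P, Exhaustive c b π' →
            (A.map (fun Ai => Pr Ai π')).prod ≤ (A.map (fun Ai => Pr Ai π)).prod} :=
  greedy_MLE_unit_cost_exhaustive_general c b ℓ hℓ hc Pr hPr
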